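/- Let M : ℝ₊^p → ℝ₊^p be concave, positively homogeneous, and finite and continuous on a compact set K contained in the unit simplex S = {z ∈ ℝ₊^p : |z|₁ = 1}, where M(z) = lim_{r→∞} ξ(r·zV)/r for a superadditive ξ. Then the convergence ξ(r·zV)/r → M(z) is uniform on K: sup_{z∈K} |M(z) − ξ(r·zV)/r| → 0 as r → ∞. -/

import Mathlib

/-!
Superadditivity gives `ξ (r • x) ≥ ⌊r / s⌋ • ξ (s • x) ≥ (r / s - 1) • ξ (s • x)`, so
`ξ (r • x) / r` is asymptotically at least `ξ (s • x) / s` for every fixed `s`. A point `w ≥ 0`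
near `z` dominates `c • z` for any `c < 1` (coordinates where `z` vanishes cost nothing), and `ξ`
is monotone on the cone; hence a value `ξ (s • zV) / s` close to `M z` bounds `ξ (r • wV) / r`
from below for all large `r` and all `w ∈ K` near `z`. Together with continuity of `M` and the
bound `ξ (r • zV) / r ≤ M z` for `r ≥ 1`, this is locally uniform convergence on `K`, which is
uniform since `K` is compact.
-/

open Filter Topology

section Superadditive

variable {E F : Type*} [AddCommGroup E] [PartialOrder E] [IsOrderedAddMonoid E]
  [AddCommGroup F] [PartialOrder F] [IsOrderedAddMonoid F] {ξ : E → F}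

theorem monotoneOn_nonneg_of_superadditive (hnn : ∀ x, 0 ≤ x → 0 ≤ ξ x)
    (hsuper : ∀ x y, 0 ≤ x → 0 ≤ y → ξ x + ξ y ≤ ξ (x + y)) :
    MonotoneOn ξ (Set.Ici 0) := fun a ha b _ hab => by
  have hba : 0 ≤ b - a := sub_nonneg.2 hab
  calc ξ a ≤ ξ a + ξ (b - a) := le_add_of_nonneg_right (hnn _ hba)
    _ ≤ ξ (a + (b - a)) := hsuper a _ ha hba
    _ = ξ b := by rw [add_sub_cancel]

theorem nsmul_le_of_superadditive (hnn : ∀ x, 0 ≤ x → 0 ≤ ξ x)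
    (hsuper : ∀ x y, 0 ≤ x → 0 ≤ y → ξ x + ξ y ≤ ξ (x + y)) {x : E} (hx : 0 ≤ x) (n : ℕ) :
    n • ξ x ≤ ξ (n • x) := by
  induction n with
  | zero => simpa using hnn 0 le_rfl
  | succ n ih =>
    calc (n + 1) • ξ x = n • ξ x + ξ x := succ_nsmul _ _
      _ ≤ ξ (n • x) + ξ x := add_le_add_left ih _
      _ ≤ ξ ((n + 1) • x) := by rw [succ_nsmul]; exact hsuper _ _ (nsmul_nonneg hx n) hx

variable [Module ℝ E] [PosSMulMono ℝ E] [Module ℝ F] [PosSMulMono ℝ F]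

theorem sub_one_smul_le_of_superadditive (hnn : ∀ x, 0 ≤ x → 0 ≤ ξ x)
    (hsuper : ∀ x y, 0 ≤ x → 0 ≤ y → ξ x + ξ y ≤ ξ (x + y)) {x : E} (hx : 0 ≤ x)
    {r s : ℝ} (hr : 0 ≤ r) (hs : 0 < s) :
    (r / s - 1) • ξ (s • x) ≤ ξ (r • x) := by
  set n := ⌊r / s⌋₊
  have hsx : 0 ≤ s • x := smul_nonneg hs.le hx
  have hns : (n : ℝ) * s ≤ r := (le_div_iff₀ hs).1 (Nat.floor_le (div_nonneg hr hs.le))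
  calc (r / s - 1) • ξ (s • x) ≤ (n : ℝ) • ξ (s • x) :=
        smul_le_smul_of_nonneg_right (by linarith [Nat.lt_floor_add_one (r / s)]) (hnn _ hsx)
    _ = n • ξ (s • x) := Nat.cast_smul_eq_nsmul ℝ _ _
    _ ≤ ξ (n • s • x) := nsmul_le_of_superadditive hnn hsuper hsx n
    _ ≤ ξ (r • x) := by
      rw [← Nat.cast_smul_eq_nsmul ℝ, smul_smul]
      exact monotoneOn_nonneg_of_superadditive hnn hsuper
        (smul_nonneg (by positivity) hx) (smul_nonneg hr hx) (smul_le_smul_of_nonneg_right hns hx)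

end Superadditive

theorem eventually_smul_le_nhdsWithin_Ici {ι : Type*} [Finite ι] {x₀ : ι → ℝ} (hx₀ : 0 ≤ x₀)
    {c : ℝ} (hc : c < 1) : ∀ᶠ x in 𝓝[Set.Ici 0] x₀, c • x₀ ≤ x := by
  simp only [Pi.le_def, Pi.smul_apply, smul_eq_mul, eventually_all]
  intro j
  rcases (hx₀ j).lt_or_eq with hj | hj
  · exact nhdsWithin_le_nhds <| ((continuous_apply j).tendsto x₀).eventually
      (lt_mem_nhds (mul_lt_of_lt_one_left hj hc)) |>.mono fun _ h => h.le
  · filter_upwards [self_mem_nhdsWithin] with x (hx : 0 ≤ x)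
    simpa [← hj] using hx j

theorem eventually_lt_div_of_superadditive {ι : Type*} [Finite ι] {G : (ι → ℝ) → ℝ}
    (hnn : ∀ x, 0 ≤ x → 0 ≤ G x) (hsuper : ∀ x y, 0 ≤ x → 0 ≤ y → G x + G y ≤ G (x + y))
    {x₀ : ι → ℝ} (hx₀ : 0 ≤ x₀) {m s : ℝ} (hs : 0 < s) (hm : m < G (s • x₀) / s) :
    ∀ᶠ n : ℝ × (ι → ℝ) in atTop ×ˢ 𝓝[Set.Ici 0] x₀, m < G (n.1 • n.2) / n.1 := by
  set a := G (s • x₀) / s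
  have hc : ∀ᶠ c in 𝓝[<] (1 : ℝ), m < c * a ∧ 0 < c := nhdsWithin_le_nhds <|
    (((continuous_mul_const a).tendsto 1).eventually (lt_mem_nhds (by simpa using hm))).and
      (lt_mem_nhds one_pos)
  obtain ⟨c, ⟨hca, hc0⟩, hc1 : c < 1⟩ := (hc.and self_mem_nhdsWithin).exists
  have hlim : Tendsto (fun r => (c - s / r) * a) atTop (𝓝 (c * a)) := by
    simpa using (tendsto_const_nhds.sub (tendsto_const_nhds.div_atTop tendsto_id)).mul_const a
  filter_upwards [((hlim.eventually (lt_mem_nhds hca)).and (eventually_gt_atTop 0)).prod_mk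
    ((eventually_smul_le_nhdsWithin_Ici hx₀ hc1).and self_mem_nhdsWithin)]
  rintro ⟨r, x⟩ ⟨⟨hlt, hr⟩, hcx, hx : 0 ≤ x⟩
  calc m < (c - s / r) * a := hlt
    _ = (r * c / s - 1) * G (s • x₀) / r := by simp only [a]; field_simp
    _ ≤ G ((r * c) • x₀) / r := by
      gcongr
      exact sub_one_smul_le_of_superadditive hnn hsuper hx₀ (by positivity) hs
    _ ≤ G (r • x) / r := by
      gcongr
      refine monotoneOn_nonneg_of_superadditive hnn hsuper (smul_nonneg (by positivity) hx₀)
        (smul_nonneg hr.le hx) ?_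
      rw [mul_smul]
      exact smul_le_smul_of_nonneg_left hcx hr.le

theorem tendstoUniformlyOnFilter_of_le_of_forall_sub_lt {ι α κ : Type*} [Fintype κ]
    {F : ι → α → κ → ℝ} {f : α → κ → ℝ} {l : Filter ι} {l' : Filter α}
    (hle : ∀ᶠ n in l ×ˢ l', F n.1 n.2 ≤ f n.2)
    (hlt : ∀ ε > 0, ∀ᶠ n in l ×ˢ l', ∀ k, f n.2 k - ε < F n.1 n.2 k) :
    TendstoUniformlyOnFilter F f l l' :=
  Metric.tendstoUniformlyOnFilter_iff.2 fun ε hε => (hle.and (hlt ε hε)).mono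
    fun _ ⟨hle, hlt⟩ => (dist_pi_lt_iff hε).2 fun k => by
      rw [Real.dist_eq, abs_lt]
      constructor <;> linarith [hle k, hlt k]

theorem M_uniform_convergence_general {p q : ℕ}
    (ξ : (Fin q → ℝ) → (Fin p → ℝ)) (V : Matrix (Fin p) (Fin q) ℝ)
    (hV : ∀ i j, 0 ≤ V i j)
    (hnn : ∀ x : Fin q → ℝ, 0 ≤ x → 0 ≤ ξ x)
    (hsuper : ∀ x y : Fin q → ℝ, 0 ≤ x → 0 ≤ y → ξ x + ξ y ≤ ξ (x + y))
    (K : Set (Fin p → ℝ)) (hK : IsCompact K)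
    (hKS : K ⊆ {z : Fin p → ℝ | 0 ≤ z ∧ ∑ i, z i = 1})
    (M : (Fin p → ℝ) → (Fin p → ℝ))
    (hMcont : ContinuousOn M K)
    (hM : ∀ z ∈ K, ∀ i, IsLUB
      {y : ℝ | ∃ r : ℝ, 1 ≤ r ∧ y = ξ (r • Matrix.vecMul z V) i / r} (M z i)) :
    TendstoUniformlyOn
      (fun (r : ℝ) (z : Fin p → ℝ) => r⁻¹ • ξ (r • Matrix.vecMul z V))
      M atTop K := by
  have hvecMul : ∀ z ∈ K, 0 ≤ Matrix.vecMul z V := fun z hz j =>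
    show 0 ≤ ∑ i, z i * V i j from Finset.sum_nonneg fun i _ => mul_nonneg ((hKS hz).1 i) (hV i j)
  refine (tendstoLocallyUniformlyOn_iff_tendstoUniformlyOn_of_compact hK).1 <|
    tendstoLocallyUniformlyOn_iff_filter.2 fun z hz => ?_
  refine tendstoUniformlyOnFilter_of_le_of_forall_sub_lt ?_ fun ε hε => eventually_all.2 fun i => ?_
  · filter_upwards [(eventually_ge_atTop 1).prod_mk self_mem_nhdsWithin]
    rintro ⟨r, w⟩ ⟨hr, hw⟩ i
    simpa [div_eq_inv_mul] using (hM w hw i).1 ⟨r, hr, rfl⟩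
  · obtain ⟨_, ⟨s, hs, rfl⟩, hs_lt⟩ :=
      (lt_isLUB_iff (hM z hz i)).1 (sub_lt_self (M z i) (half_pos hε))
    have hξ := eventually_lt_div_of_superadditive (fun x hx => hnn x hx i)
      (fun x y hx hy => hsuper x y hx hy i) (hvecMul z hz) (by linarith) hs_lt
    have hx : Tendsto (fun w => Matrix.vecMul w V) (𝓝[K] z) (𝓝[Set.Ici 0] (Matrix.vecMul z V)) :=
      tendsto_nhdsWithin_of_tendsto_nhds_of_eventually_within _
        ((continuous_id.matrix_vecMul continuous_const).continuousWithinAt.tendsto)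
        (eventually_mem_nhdsWithin.mono hvecMul)
    have hMw : ∀ᶠ w in 𝓝[K] z, M w i < M z i + ε / 2 :=
      (continuousWithinAt_pi.1 (hMcont z hz) i).eventually (gt_mem_nhds (by linarith))
    filter_upwards [(tendsto_id.prodMap hx).eventually hξ, hMw.prod_inr atTop]
    rintro ⟨r, w⟩ hlt hMw
    simp only [Prod.map, id, Pi.smul_apply, smul_eq_mul] at hlt hMw ⊢
    rw [← div_eq_inv_mul]
    linarith

/-- If `M(z) = sup_{r ≥ 1} ξ(r·zV)/r` is finite and continuous on a compact set `K`
contained in the unit simplex, then the convergence `ξ(r·zV)/r → M(z)` as `r → ∞`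
is uniform on `K`. -/
theorem M_uniform_convergence {p q : ℕ}
    (ξ : (Fin q → ℝ) → (Fin p → ℝ)) (V : Matrix (Fin p) (Fin q) ℝ)
    (hV : ∀ i j, 0 ≤ V i j)
    (hnn : ∀ x : Fin q → ℝ, 0 ≤ x → 0 ≤ ξ x)
    (hsuper : ∀ x y : Fin q → ℝ, 0 ≤ x → 0 ≤ y → ξ x + ξ y ≤ ξ (x + y))
    (h0 : ξ 0 = 0)
    (K : Set (Fin p → ℝ)) (hK : IsCompact K)
    (hKS : K ⊆ {z : Fin p → ℝ | 0 ≤ z ∧ ∑ i, z i = 1})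
    (M : (Fin p → ℝ) → (Fin p → ℝ))
    (hMcont : ContinuousOn M K)
    (hM : ∀ z ∈ K, ∀ i, IsLUB
      {y : ℝ | ∃ r : ℝ, 1 ≤ r ∧ y = ξ (r • Matrix.vecMul z V) i / r} (M z i)) :
    TendstoUniformlyOn
      (fun (r : ℝ) (z : Fin p → ℝ) => r⁻¹ • ξ (r • Matrix.vecMul z V))
      M atTop K :=
  M_uniform_convergence_general ξ V hV hnn hsuper K hK hKS M hMcont hM
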